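/- arXiv:0710.0199 — 2 statements merged into one kernel-verified Lean document; each statement's English description precedes it below -/
import Mathlib

section
/- Let 𝓗 ⊆ Z₄ⁿ be an additive subgroup that is a quaternary (n, 4n, n)₄-code, i.e., |𝓗| = 4n and any two distinct codewords are at Lee distance at least n. Let 𝓡' = {(0,…,0), (2,…,2)} ⊆ Z₄ⁿ. Then 𝓗' = {(a, a+b) : a ∈ 𝓗, b ∈ 𝓡'} ⊆ Z₄²ⁿ is an additive subgroup with |𝓗'| = 8n and minimum Lee distance at least 2n, i.e., a (2n, 4·(2n), 2n)₄-code. -/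
/-- Lee weight on ℤ/4ℤ: wt(0)=0, wt(1)=wt(3)=1, wt(2)=2. -/
def leeWt (c : ZMod 4) : ℕ := min c.val (4 - c.val)

/-- Lee weight of a vector over ℤ/4ℤ. -/
def leeWtV {n : ℕ} (x : Fin n → ZMod 4) : ℕ := ∑ i, leeWt (x i)

/-- Lee distance. -/
def leeDist {n : ℕ} (a b : Fin n → ZMod 4) : ℕ := leeWtV (b - a)

/-- First Gray component: β(0)=β(1)=0, β(2)=β(3)=1. -/
def grayβ (c : ZMod 4) : ZMod 2 := if 2 ≤ c.val then 1 else 0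

/-- Second Gray component: γ(0)=γ(3)=0, γ(1)=γ(2)=1. -/
def grayγ (c : ZMod 4) : ZMod 2 := if c.val = 1 ∨ c.val = 2 then 1 else 0

/-- The Gray map, coordinatewise 0↦00, 1↦01, 2↦11, 3↦10
(first bits in the first half, second bits in the second half). -/
def gray {n : ℕ} (a : Fin n → ZMod 4) : (Fin n ⊕ Fin n) → ZMod 2 :=
  Sum.elim (fun i => grayβ (a i)) (fun i => grayγ (a i))

lemma leeWt_add_two : ∀ t : ZMod 4, leeWt t + leeWt (t + 2) = 2 := by decide

lemma elim_add {n : ℕ} (a b a' b' : Fin n → ZMod 4) :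
    Sum.elim a b + Sum.elim a' b' = Sum.elim (a + a') (b + b') := by
  funext i; cases i <;> rfl

lemma elim_neg {n : ℕ} (a b : Fin n → ZMod 4) :
    -Sum.elim a b = Sum.elim (-a) (-b) := by
  funext i; cases i <;> rfl

lemma elim_sub {n : ℕ} (a b a' b' : Fin n → ZMod 4) :
    Sum.elim a' b' - Sum.elim a b = Sum.elim (a' - a) (b' - b) := by
  funext i; cases i <;> rfl

/-- the Plotkin (u,u+v)-doubling of a quaternary (n,4n,n)₄-code with
𝓡' = {0…0, 2…2} yields a quaternary (2n, 8n, 2n)₄-code. -/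
theorem plotkin_double (n : ℕ) (H : AddSubgroup (Fin n → ZMod 4))
    (hcard : Nat.card H = 4 * n)
    (hdist : ∀ a ∈ H, ∀ a' ∈ H, a ≠ a' → n ≤ leeDist a a') :
    let R' : Set (Fin n → ZMod 4) := {0, fun _ => 2}
    let H' : Set ((Fin n ⊕ Fin n) → ZMod 4) :=
      {x | ∃ a ∈ H, ∃ b ∈ R', x = Sum.elim a (a + b)}
    (∃ S : AddSubgroup ((Fin n ⊕ Fin n) → ZMod 4), (S : Set _) = H') ∧
    Nat.card H' = 8 * n ∧
    (∀ x ∈ H', ∀ y ∈ H', x ≠ y →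
      2 * n ≤ ∑ i, leeWt ((y - x) i)) := by
  intro R' H'
  have hn : 0 < n := by
    rcases Nat.eq_zero_or_pos n with h | h
    · exfalso
      have : (0 : ℕ) < Nat.card H := Nat.card_pos
      omega
    · exact h
  set c : Fin n → ZMod 4 := fun _ => 2 with hc
  have hc0 : c ≠ 0 := by
    intro h
    have := congrFun h ⟨0, hn⟩
    simp [hc] at this
    exact absurd this (by decide)
  have hRmem : ∀ b ∈ R', b = 0 ∨ b = c := fun b hb => hb
  have hRadd : ∀ b ∈ R', ∀ b' ∈ R', b + b' ∈ R' := by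
    intro b hb b' hb'
    have hcc : c + c = 0 := by funext i; simp [hc]; decide
    rcases hRmem b hb with rfl | rfl <;> rcases hRmem b' hb' with rfl | rfl <;>
      simp [R', hcc] <;> exact Or.inr hc
  have hRneg : ∀ b ∈ R', -b ∈ R' := by
    intro b hb
    have hnc : -c = c := by funext i; simp [hc]; decide
    rcases hRmem b hb with rfl | rfl <;> simp [R', hnc] <;> exact Or.inr hc
  refine ⟨⟨{ carrier := H'
           , zero_mem' := ⟨0, H.zero_mem, 0, Or.inl rfl, by
              funext i; cases i <;> simp⟩
           , add_mem' := ?_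
           , neg_mem' := ?_ }, rfl⟩, ?_, ?_⟩
  · rintro x y ⟨a, ha, b, hb, rfl⟩ ⟨a2, ha2, b2, hb2, rfl⟩
    exact ⟨a + a2, H.add_mem ha ha2, b + b2, hRadd b hb b2 hb2, by
      rw [elim_add]; congr 1; ring⟩
  · rintro x ⟨a, ha, b, hb, rfl⟩
    exact ⟨-a, H.neg_mem ha, -b, hRneg b hb, by
      rw [elim_neg]; congr 1; ring⟩
  · -- cardinality
    have himg : H' = (fun p : (Fin n → ZMod 4) × (Fin n → ZMod 4) =>
        Sum.elim p.1 (p.1 + p.2)) '' ((H : Set _) ×ˢ R') := by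
      ext x
      constructor
      · rintro ⟨a, ha, b, hb, rfl⟩; exact ⟨⟨a, b⟩, ⟨ha, hb⟩, rfl⟩
      · rintro ⟨⟨a, b⟩, ⟨ha, hb⟩, rfl⟩; exact ⟨a, ha, b, hb, rfl⟩
    have hinj : Function.Injective (fun p : (Fin n → ZMod 4) × (Fin n → ZMod 4) =>
        Sum.elim p.1 (p.1 + p.2)) := by
      rintro ⟨a, b⟩ ⟨a', b'⟩ h
      simp only at h
      have ha : a = a' := by funext i; exact congrFun h (Sum.inl i)
      have hb : a + b = a' + b' := by funext i; exact congrFun h (Sum.inr i)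
      subst ha
      have : b = b' := by
        have := hb
        funext i
        have := congrFun hb i
        simpa using this
      simp [this]
    rw [himg, Nat.card_coe_set_eq, Set.ncard_image_of_injective _ hinj,
        ← Nat.card_coe_set_eq]
    have : Nat.card ((H : Set (Fin n → ZMod 4)) ×ˢ R' : Set _) =
        Nat.card (H : Set (Fin n → ZMod 4)) * Nat.card R' := by
      rw [Nat.card_congr (Equiv.Set.prod _ _), Nat.card_prod]
    rw [this]
    have hR2 : Nat.card R' = 2 := by
      rw [Nat.card_coe_set_eq]
      exact Set.ncard_pair (Ne.symm hc0)
    have hH : Nat.card ((H : Set (Fin n → ZMod 4)) : Type) = 4 * n := by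
      rw [← hcard]; rfl
    rw [hH, hR2]; ring
  · -- distance
    rintro x ⟨a, ha, b, hb, rfl⟩ y ⟨a', ha', b', hb', rfl⟩ hxy
    rw [elim_sub]
    rw [Fintype.sum_sum_type]
    simp only [Sum.elim_inl, Sum.elim_inr]
    by_cases hbb : b = b'
    · subst hbb
      have haa : a ≠ a' := by
        intro h; subst h; exact hxy rfl
      have h1 : n ≤ leeDist a a' := hdist a ha a' ha' haa
      have h2 : (a' + b - (a + b)) = a' - a := by ring
      rw [h2]
      have : leeDist a a' = ∑ i, leeWt ((a' - a) i) := rfl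
      omega
    · have hd : a' + b' - (a + b) = (a' - a) + c := by
        rcases hRmem b hb with rfl | rfl <;> rcases hRmem b' hb' with rfl | rfl
        · exact absurd rfl hbb
        · ring
        · have hnc : -c = c := by funext i; simp [hc]; decide
          have h2 : a' + 0 - (a + c) = a' - a + -c := by ring
          rw [h2, hnc]
        · exact absurd rfl hbb
      rw [hd]
      have : (∑ i, leeWt ((a' - a) i)) + ∑ i, leeWt (((a' - a) + c) i) = 2 * n := by
        rw [← Finset.sum_add_distrib]
        have : ∀ i, leeWt ((a' - a) i) + leeWt (((a' - a) + c) i) = 2 := by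
          intro i
          simpa [hc] using leeWt_add_two ((a' - a) i)
        rw [Finset.sum_congr rfl (fun i _ => this i)]
        simp [mul_comm]
      omega
end

section
/- Let 𝓗 ⊆ Z₄ⁿ be an additive subgroup with |𝓗| = 4n and minimum Lee distance at least n. Let 𝓡'' = {(0,…,0), (1,…,1), (2,…,2), (3,…,3)} ⊆ Z₄ⁿ. Then 𝓗'' = {(a, a+b, a+2b, a+3b) : a ∈ 𝓗, b ∈ 𝓡''} ⊆ Z₄⁴ⁿ is an additive subgroup with |𝓗''| = 16n and minimum Lee distance at least 4n, i.e., a (4n, 4·(4n), 4n)₄-code. -/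
lemma leeWt_four (t f : ZMod 4) (hf : f ≠ 0) :
    leeWt t + leeWt (t + f) + leeWt (t + 2 * f) + leeWt (t + 3 * f) = 4 := by
  revert t f; decide

def quad (n : ℕ) : (Fin n → ZMod 4) × ZMod 4 →+ ((Fin n ⊕ Fin n ⊕ Fin n ⊕ Fin n) → ZMod 4) :=
  AddMonoidHom.mk' (fun p => Sum.elim p.1 (Sum.elim (p.1 + fun _ => p.2)
      (Sum.elim (p.1 + fun _ => 2 * p.2) (p.1 + fun _ => 3 * p.2))))
    (by
      intro p q; funext i
      rcases i with i | i | i | i <;> simp [Pi.add_apply] <;> ring)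

lemma quad_inj {n : ℕ} (hn : 0 < n) : Function.Injective (quad n) := by
  intro p q h
  have h1 : p.1 = q.1 := by funext i; exact congrFun h (Sum.inl i)
  have h2 := congrFun h (Sum.inr (Sum.inl ⟨0, hn⟩))
  simp [quad, AddMonoidHom.mk'] at h2
  rw [h1] at h2
  exact Prod.ext h1 (add_left_cancel h2)

lemma quad_eq {n : ℕ} (a : Fin n → ZMod 4) (e : ZMod 4) :
    quad n (a, e) = Sum.elim a (Sum.elim (a + fun _ => e)
      (Sum.elim (a + 2 • (fun _ => e : Fin n → ZMod 4)) (a + 3 • (fun _ => e : Fin n → ZMod 4)))) := by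
  funext i
  rcases i with i | i | i | i <;> simp [quad]


/-- the quadrupling construction (a, a+b, a+2b, a+3b) with b a repetition
word applied to a quaternary (n,4n,n)₄-code yields a (4n, 16n, 4n)₄-code. -/
theorem plotkin_quadruple (n : ℕ) (H : AddSubgroup (Fin n → ZMod 4))
    (hcard : Nat.card H = 4 * n)
    (hdist : ∀ a ∈ H, ∀ a' ∈ H, a ≠ a' → n ≤ leeDist a a') :
    let R'' : Set (Fin n → ZMod 4) :=
      {0, fun _ => 1, fun _ => 2, fun _ => 3}
    let H'' : Set ((Fin n ⊕ Fin n ⊕ Fin n ⊕ Fin n) → ZMod 4) :=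
      {x | ∃ a ∈ H, ∃ b ∈ R'',
        x = Sum.elim a (Sum.elim (a + b) (Sum.elim (a + 2 • b) (a + 3 • b)))}
    (∃ S : AddSubgroup ((Fin n ⊕ Fin n ⊕ Fin n ⊕ Fin n) → ZMod 4), (S : Set _) = H'') ∧
    Nat.card H'' = 16 * n ∧
    (∀ x ∈ H'', ∀ y ∈ H'', x ≠ y →
      4 * n ≤ ∑ i, leeWt ((y - x) i)) := by
  intro R'' H''
  have hn : 0 < n := by
    have h1 : Nat.card H ≠ 0 := Nat.card_pos.ne'
    omega
  have hK : H'' = ⇑(quad n) '' ((H : Set _) ×ˢ (Set.univ : Set (ZMod 4))) := by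
    ext x
    constructor
    · rintro ⟨a, ha, b, hb, rfl⟩
      have hb' : ∃ e : ZMod 4, b = fun _ => e := by
        rcases hb with rfl | rfl | rfl | rfl
        · exact ⟨0, rfl⟩
        · exact ⟨1, rfl⟩
        · exact ⟨2, rfl⟩
        · exact ⟨3, rfl⟩
      obtain ⟨e, rfl⟩ := hb'
      exact ⟨(a, e), ⟨ha, Set.mem_univ _⟩, quad_eq a e⟩
    · rintro ⟨⟨a, e⟩, ⟨ha, -⟩, rfl⟩
      have he : ∀ e : ZMod 4, e = 0 ∨ e = 1 ∨ e = 2 ∨ e = 3 := by decide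
      refine ⟨a, ha, (fun _ => e), ?_, quad_eq a e⟩
      rcases he e with rfl | rfl | rfl | rfl
      · left; rfl
      · right; left; rfl
      · right; right; left; rfl
      · right; right; right; rfl
  refine ⟨⟨(H.prod ⊤).map (quad n), ?_⟩, ?_, ?_⟩
  · rw [AddSubgroup.coe_map, AddSubgroup.coe_prod, AddSubgroup.coe_top, hK]
  · rw [hK, Nat.card_coe_set_eq,
      Set.ncard_image_of_injective _ (quad_inj hn), ← Nat.card_coe_set_eq,
      Nat.card_congr (Equiv.Set.prod _ _), Nat.card_prod,
      Nat.card_congr (Equiv.Set.univ _)]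
    rw [SetLike.coe_sort_coe, hcard, Nat.card_eq_fintype_card, ZMod.card]
    ring
  · intro x hx y hy hne
    rw [hK] at hx hy
    obtain ⟨p, ⟨hpH, -⟩, rfl⟩ := hx
    obtain ⟨q, ⟨hqH, -⟩, rfl⟩ := hy
    have hpq : p ≠ q := fun h => hne (by rw [h])
    have hsub : quad n q - quad n p = quad n (q - p) := (map_sub _ _ _).symm
    rw [hsub]
    set c : Fin n → ZMod 4 := q.1 - p.1 with hc
    set f : ZMod 4 := q.2 - p.2 with hf
    have hqp : q - p = (c, f) := rfl
    rw [hqp]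
    clear_value c f
    have hsum : ∑ i, leeWt ((quad n (c, f)) i) =
        ∑ i : Fin n, (leeWt (c i) + leeWt (c i + f) + leeWt (c i + 2 * f) + leeWt (c i + 3 * f)) := by
      rw [Fintype.sum_sum_type, Fintype.sum_sum_type, Fintype.sum_sum_type]
      simp [quad, AddMonoidHom.mk', Finset.sum_add_distrib]
      ring
    rw [hsum]
    by_cases hf0 : f = 0
    · subst hf0
      have hc0 : c ≠ 0 := by
        intro h
        apply hpq
        have h1 : q.1 = p.1 := by rw [← sub_eq_zero, ← hc]; exact h
        have h2 : q.2 = p.2 := by rw [← sub_eq_zero, ← hf]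
        exact (Prod.ext h1 h2).symm
      have hcH : c ∈ H := by rw [hc]; exact H.sub_mem hqH hpH
      have hd : n ≤ leeWtV c := by
        have := hdist 0 H.zero_mem c hcH (fun h => hc0 h.symm)
        rwa [leeDist, sub_zero] at this
      have heach : ∀ i : Fin n, leeWt (c i) + leeWt (c i + 0) + leeWt (c i + 2 * 0) + leeWt (c i + 3 * 0) = 4 * leeWt (c i) := by
        intro i; simp; ring
      rw [Finset.sum_congr rfl (fun i _ => heach i), ← Finset.mul_sum]
      have : leeWtV c = ∑ i, leeWt (c i) := rfl
      omega
    · have heach : ∀ i : Fin n, leeWt (c i) + leeWt (c i + f) + leeWt (c i + 2 * f) + leeWt (c i + 3 * f) = 4 :=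
        fun i => leeWt_four (c i) f hf0
      rw [Finset.sum_congr rfl (fun i _ => heach i)]
      simp [Finset.sum_const]
      omega
end
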